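/- Let α > 0 and m, n ∈ ℕ with √(2n+1) ≤ (α/4)√(2m+1). Then ∫_ℝ h_m(x)² h_n(αx)² dx ≤ C / (α √(2m+1)) for a universal constant C. -/

import Mathlib

open Real MeasureTheory

/-- The `m`-th Hermite function: the `L²`-normalized eigenfunction of the harmonic
oscillator `-d²/dx² + x²` with eigenvalue `2m+1`. -/
noncomputable def hermiteFunction (m : ℕ) (x : ℝ) : ℝ :=
  (Real.sqrt (2 ^ m * Nat.factorial m * Real.sqrt Real.pi))⁻¹ * (Real.sqrt 2) ^ m *
    (Polynomial.aeval (Real.sqrt 2 * x) (Polynomial.hermite m) : ℝ) * Real.exp (-x ^ 2 / 2)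

/-!
Write `λ = 2m + 1`. The ladder relations
`h_m' = x h_m - √(2(m+1)) h_{m+1} = √(2m) h_{m-1} - x h_m`
give `∫ h_m² = 1`, `h_m'² ≤ m h_{m-1}² + (m+1) h_{m+1}²` and `h_m'' = (x² - λ) h_m`.
The energy `E = h_m'² + (λ - x²) h_m²` has `E' = -2x h_m²`, so it peaks at `0`; averaging it
over `[0, √λ / 2]` gives `E(0) ≤ 5√λ`, hence `h_m² ≤ 7 / √λ` for `|x| ≤ √λ / 2`. Beyond the
turning point `√λ`, `h_m h_m'` is nondecreasing and tends to `0`, so `h_m²` decreases there, and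
comparing with `∫ h_m² ≤ 1` over `[y/2, y]` gives `h_m(y)² ≤ 2 / |y|` for `|y| ≥ 2√λ`.
In the bilinear integral, for `|x| ≤ √(2m+1) / 2` bound `h_m(x)²` by `7 / √(2m+1)` and use
`∫ h_n(αx)² dx = 1/α`; otherwise `|αx| ≥ 2√(2n+1)` by hypothesis, so
`h_n(αx)² ≤ 4 / (α √(2m+1))`, and `∫ h_m² = 1`.
-/

open Polynomial Filter Topology Set
open scoped Nat

namespace Polynomial

theorem derivative_hermite_succ (n : ℕ) :
    derivative (hermite (n + 1)) = ((n : ℤ[X]) + 1) * hermite n := by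
  induction n with
  | zero => simp
  | succ n ih =>
    rw [hermite_succ (n + 1), derivative_sub, derivative_mul, derivative_X, ih, derivative_mul,
      hermite_succ n]
    push_cast
    simp only [derivative_add, derivative_natCast, derivative_one, zero_mul, zero_add]
    ring

theorem hermite_comp_neg_X (n : ℕ) : (hermite n).comp (-X) = (-1) ^ n * hermite n := by
  induction n with
  | zero => simp
  | succ n ih =>
    have hderiv : (derivative (hermite n)).comp (-X) = -((-1) ^ n * derivative (hermite n)) := by
      have h := congrArg derivative ih
      rw [derivative_comp] at h
      simp only [derivative_neg, derivative_X, derivative_mul, derivative_pow, derivative_one,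
        neg_zero, mul_zero, zero_mul, zero_add] at h
      linear_combination (-1 : ℤ[X]) * h
    rw [hermite_succ, sub_comp, mul_comp, X_comp, ih, hderiv]
    ring

theorem integrable_eval_mul_exp_neg_mul_sq (p : ℝ[X]) {b : ℝ} (hb : 0 < b) :
    Integrable fun x => p.eval x * exp (-b * x ^ 2) := by
  induction p using Polynomial.induction_on' with
  | add p q hp hq => simpa only [eval_add, add_mul, Pi.add_def] using hp.add hq
  | monomial n c =>
    have h := (integrable_rpow_mul_exp_neg_mul_sq hb (by linarith [n.cast_nonneg (α := ℝ)] :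
      (-1 : ℝ) < n)).const_mul c
    simpa [Real.rpow_natCast, mul_assoc] using h

theorem tendsto_eval_mul_exp_neg_mul_sq_cocompact (p : ℝ[X]) {b : ℝ} (hb : 0 < b) :
    Tendsto (fun x => p.eval x * exp (-b * x ^ 2)) (cocompact ℝ) (𝓝 0) := by
  induction p using Polynomial.induction_on' with
  | add p q hp hq => simpa [add_mul] using hp.add hq
  | monomial n c =>
    have h := (tendsto_rpow_abs_mul_exp_neg_mul_sq_cocompact hb n).const_mul |c|
    rw [mul_zero] at h
    refine tendsto_zero_iff_norm_tendsto_zero.2 (h.congr fun x => ?_)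
    simp [Real.rpow_natCast, mul_assoc]

end Polynomial

noncomputable def hermiteNormConst (m : ℕ) : ℝ := (√(2 ^ m * m ! * √π))⁻¹ * √2 ^ m

theorem hermiteFunction_apply (m : ℕ) (x : ℝ) :
    hermiteFunction m x = hermiteNormConst m * aeval (√2 * x) (hermite m) * exp (-x ^ 2 / 2) :=
  rfl

theorem hermiteNormConst_eq_sqrt_mul_succ (m : ℕ) :
    hermiteNormConst m = √(m + 1) * hermiteNormConst (m + 1) := by
  have hprod : (2 : ℝ) ^ (m + 1) * (m + 1)! * √π = 2 * (m + 1) * (2 ^ m * m ! * √π) := by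
    push_cast [Nat.factorial_succ]; ring
  have hm : √((m : ℝ) + 1) ≠ 0 := by positivity
  have hA : √(2 ^ m * m ! * √π) ≠ 0 := by positivity
  rw [hermiteNormConst, hermiteNormConst, hprod,
    Real.sqrt_mul (by positivity : (0 : ℝ) ≤ 2 * (m + 1)), Real.sqrt_mul zero_le_two, pow_succ]
  field_simp

theorem hasDerivAt_hermiteFunction (m : ℕ) (x : ℝ) :
    HasDerivAt (hermiteFunction m) (hermiteNormConst m *
      (√2 * aeval (√2 * x) (derivative (hermite m)) - x * aeval (√2 * x) (hermite m)) *
        exp (-x ^ 2 / 2)) x := by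
  have hpoly : HasDerivAt (fun y => aeval (√2 * y) (hermite m))
      (aeval (√2 * x) (derivative (hermite m)) * √2) x :=
    ((hermite m).hasDerivAt_aeval (√2 * x)).comp x
      ((hasDerivAt_id x).const_mul √2 |>.congr_deriv (mul_one _))
  have hexponent : HasDerivAt (fun y : ℝ => -y ^ 2 / 2) (-x) x :=
    ((hasDerivAt_pow 2 x).fun_neg.div_const 2).congr_deriv (by norm_num; ring)
  have hfun : hermiteFunction m =
      fun y => hermiteNormConst m * (aeval (√2 * y) (hermite m) * exp (-y ^ 2 / 2)) := by
    ext y; rw [hermiteFunction_apply]; ring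
  rw [hfun]
  exact ((hpoly.mul hexponent.exp).const_mul _).congr_deriv (by ring)

theorem hasDerivAt_hermiteFunction_raising (m : ℕ) (x : ℝ) :
    HasDerivAt (hermiteFunction m)
      (x * hermiteFunction m x - √(2 * (m + 1)) * hermiteFunction (m + 1) x) x := by
  refine (hasDerivAt_hermiteFunction m x).congr_deriv ?_
  have hsucc := congrArg (aeval (√2 * x)) (hermite_succ m)
  simp only [map_sub, map_mul, aeval_X] at hsucc
  rw [hermiteFunction_apply, hermiteFunction_apply, hsucc, hermiteNormConst_eq_sqrt_mul_succ m,
    Real.sqrt_mul zero_le_two]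
  linear_combination (x * √(m + 1) * hermiteNormConst (m + 1) *
    aeval (√2 * x) (hermite m) * exp (-x ^ 2 / 2)) * Real.sq_sqrt zero_le_two

-- For `m = 0` the coefficient `√(2 * m)` vanishes, so the junk value `hermiteFunction (0 - 1)`
-- is harmless.
theorem hasDerivAt_hermiteFunction_lowering (m : ℕ) (x : ℝ) :
    HasDerivAt (hermiteFunction m)
      (√(2 * m) * hermiteFunction (m - 1) x - x * hermiteFunction m x) x := by
  refine (hasDerivAt_hermiteFunction m x).congr_deriv ?_
  cases m with
  | zero => simp [hermiteFunction_apply]; ring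
  | succ m =>
    rw [derivative_hermite_succ, hermiteFunction_apply, hermiteFunction_apply, Nat.add_sub_cancel,
      hermiteNormConst_eq_sqrt_mul_succ m]
    push_cast
    rw [Real.sqrt_mul zero_le_two]
    simp only [map_mul, map_add, map_natCast, map_one]
    linear_combination (-√2 * hermiteNormConst (m + 1) * aeval (√2 * x) (hermite m) *
      exp (-x ^ 2 / 2)) * Real.mul_self_sqrt (by positivity : (0 : ℝ) ≤ m + 1)

theorem deriv_hermiteFunction (m : ℕ) (x : ℝ) :
    deriv (hermiteFunction m) x = (√(2 * m) * hermiteFunction (m - 1) x -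
      √(2 * (m + 1)) * hermiteFunction (m + 1) x) / 2 := by
  have hraise := (hasDerivAt_hermiteFunction_raising m x).deriv
  have hlower := (hasDerivAt_hermiteFunction_lowering m x).deriv
  linarith

theorem deriv_hermiteFunction_sq_le (m : ℕ) (x : ℝ) :
    deriv (hermiteFunction m) x ^ 2 ≤
      m * hermiteFunction (m - 1) x ^ 2 + (m + 1) * hermiteFunction (m + 1) x ^ 2 := by
  rw [deriv_hermiteFunction]
  set a := √(2 * m) * hermiteFunction (m - 1) x
  set b := √(2 * (m + 1)) * hermiteFunction (m + 1) x
  have ha : a ^ 2 = 2 * m * hermiteFunction (m - 1) x ^ 2 := by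
    rw [mul_pow, Real.sq_sqrt (by positivity)]
  have hb : b ^ 2 = 2 * (m + 1) * hermiteFunction (m + 1) x ^ 2 := by
    rw [mul_pow, Real.sq_sqrt (by positivity)]
  nlinarith [sq_nonneg (a + b)]

theorem hasDerivAt_deriv_hermiteFunction (m : ℕ) (x : ℝ) :
    HasDerivAt (deriv (hermiteFunction m)) ((x ^ 2 - (2 * m + 1)) * hermiteFunction m x) x := by
  have hfun : deriv (hermiteFunction m) =
      fun y => y * hermiteFunction m y - √(2 * (m + 1)) * hermiteFunction (m + 1) y :=
    funext fun y => (hasDerivAt_hermiteFunction_raising m y).deriv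
  have hlower := hasDerivAt_hermiteFunction_lowering (m + 1) x
  push_cast at hlower
  rw [hfun]
  refine (((hasDerivAt_id x).mul (hasDerivAt_hermiteFunction_raising m x)).sub
    (hlower.const_mul _)).congr_deriv ?_
  simp only [id]
  linear_combination (-hermiteFunction m x) *
    Real.mul_self_sqrt (by positivity : (0 : ℝ) ≤ 2 * (m + 1))

theorem differentiable_hermiteFunction (m : ℕ) : Differentiable ℝ (hermiteFunction m) :=
  fun x => (hasDerivAt_hermiteFunction m x).differentiableAt

theorem continuous_hermiteFunction (m : ℕ) : Continuous (hermiteFunction m) :=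
  (differentiable_hermiteFunction m).continuous

theorem differentiable_deriv_hermiteFunction (m : ℕ) :
    Differentiable ℝ (deriv (hermiteFunction m)) :=
  fun x => (hasDerivAt_deriv_hermiteFunction m x).differentiableAt

theorem exists_hermiteFunction_mul_eq (i j : ℕ) : ∃ p : ℝ[X],
    ∀ x, hermiteFunction i x * hermiteFunction j x = p.eval x * exp (-1 * x ^ 2) := by
  refine ⟨C (hermiteNormConst i * hermiteNormConst j) *
    ((hermite i).map (algebraMap ℤ ℝ)).comp (C √2 * X) *
    ((hermite j).map (algebraMap ℤ ℝ)).comp (C √2 * X), fun x => ?_⟩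
  have hexp : exp (-1 * x ^ 2) = exp (-x ^ 2 / 2) * exp (-x ^ 2 / 2) := by
    rw [← Real.exp_add]; ring_nf
  simp only [hermiteFunction_apply, hexp, eval_mul, eval_C, eval_comp, eval_X,
    eval_map_algebraMap]
  ring

theorem integrable_hermiteFunction_mul (i j : ℕ) :
    Integrable fun x => hermiteFunction i x * hermiteFunction j x := by
  obtain ⟨p, hp⟩ := exists_hermiteFunction_mul_eq i j
  simpa only [hp] using p.integrable_eval_mul_exp_neg_mul_sq one_pos

theorem tendsto_hermiteFunction_mul_cocompact (i j : ℕ) :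
    Tendsto (fun x => hermiteFunction i x * hermiteFunction j x) (cocompact ℝ) (𝓝 0) := by
  obtain ⟨p, hp⟩ := exists_hermiteFunction_mul_eq i j
  simpa only [hp] using p.tendsto_eval_mul_exp_neg_mul_sq_cocompact one_pos

theorem integrable_hermiteFunction_sq (m : ℕ) : Integrable fun x => hermiteFunction m x ^ 2 := by
  simpa only [sq] using integrable_hermiteFunction_mul m m

theorem integral_hermiteFunction_zero_sq : ∫ x, hermiteFunction 0 x ^ 2 = 1 := by
  have hsq : ∀ x, hermiteFunction 0 x ^ 2 = (√π)⁻¹ * exp (-1 * x ^ 2) := fun x => by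
    have hexp : exp (-x ^ 2 / 2) ^ 2 = exp (-1 * x ^ 2) := by
      rw [← Real.exp_nat_mul]; ring_nf
    simp only [hermiteFunction_apply, hermiteNormConst, hermite_zero, map_one, pow_zero,
      Nat.factorial_zero, Nat.cast_one, one_mul, mul_one, mul_pow, hexp, inv_pow,
      Real.sq_sqrt (Real.sqrt_nonneg π)]
  simp only [hsq, integral_const_mul, integral_gaussian, div_one]
  exact inv_mul_cancel₀ (by positivity)

theorem integral_hermiteFunction_succ_sq (m : ℕ) :
    ∫ x, hermiteFunction (m + 1) x ^ 2 = ∫ x, hermiteFunction m x ^ 2 := by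
  set r := √(2 * (m + 1) : ℝ)
  have hderiv : ∀ x, HasDerivAt (fun x => hermiteFunction m x * hermiteFunction (m + 1) x)
      (r * (hermiteFunction m x ^ 2 - hermiteFunction (m + 1) x ^ 2)) x := fun x => by
    have hlower := hasDerivAt_hermiteFunction_lowering (m + 1) x
    push_cast at hlower
    refine ((hasDerivAt_hermiteFunction_raising m x).mul hlower).congr_deriv ?_
    ring
  have hzero := integral_eq_zero_of_hasDerivAt_of_integrable hderiv
    (((integrable_hermiteFunction_sq m).sub (integrable_hermiteFunction_sq (m + 1))).const_mul r)
    (integrable_hermiteFunction_mul m (m + 1))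
  rw [integral_const_mul, integral_sub (integrable_hermiteFunction_sq m)
    (integrable_hermiteFunction_sq (m + 1))] at hzero
  have hr : r ≠ 0 := by positivity
  linarith [(mul_eq_zero.1 hzero).resolve_left hr]

theorem integral_hermiteFunction_sq (m : ℕ) : ∫ x, hermiteFunction m x ^ 2 = 1 := by
  induction m with
  | zero => exact integral_hermiteFunction_zero_sq
  | succ m ih => rw [integral_hermiteFunction_succ_sq, ih]

theorem intervalIntegral_hermiteFunction_sq_le_one (m : ℕ) {a b : ℝ} (hab : a ≤ b) :
    ∫ x in a..b, hermiteFunction m x ^ 2 ≤ 1 := by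
  rw [intervalIntegral.integral_of_le hab, ← integral_hermiteFunction_sq m]
  exact setIntegral_le_integral (integrable_hermiteFunction_sq m)
    (.of_forall fun x => sq_nonneg _)

noncomputable def hermiteEnergy (m : ℕ) (x : ℝ) : ℝ :=
  deriv (hermiteFunction m) x ^ 2 + (2 * m + 1 - x ^ 2) * hermiteFunction m x ^ 2

theorem continuous_hermiteEnergy (m : ℕ) : Continuous (hermiteEnergy m) := by
  have := continuous_hermiteFunction m
  have := (differentiable_deriv_hermiteFunction m).continuous
  unfold hermiteEnergy
  fun_prop

theorem hasDerivAt_hermiteEnergy (m : ℕ) (x : ℝ) :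
    HasDerivAt (hermiteEnergy m) (-2 * x * hermiteFunction m x ^ 2) x := by
  have hpoly : HasDerivAt (fun y : ℝ => 2 * m + 1 - y ^ 2) (-(2 * x)) x := by
    simpa using (hasDerivAt_pow 2 x).const_sub (2 * (m : ℝ) + 1)
  refine (((hasDerivAt_deriv_hermiteFunction m x).pow 2).add
    (hpoly.mul ((differentiable_hermiteFunction m x).hasDerivAt.pow 2))).congr_deriv ?_
  simp only [Pi.pow_apply]
  ring

theorem hermiteEnergy_le_hermiteEnergy_zero (m : ℕ) (x : ℝ) :
    hermiteEnergy m x ≤ hermiteEnergy m 0 := by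
  rcases le_total 0 x with hx | hx
  · refine antitoneOn_of_hasDerivWithinAt_nonpos (convex_Ici 0)
      (continuous_hermiteEnergy m).continuousOn
      (fun y _ => (hasDerivAt_hermiteEnergy m y).hasDerivWithinAt) (fun y hy => ?_)
      self_mem_Ici hx hx
    rw [interior_Ici] at hy
    have : 0 < y := hy
    nlinarith [sq_nonneg (hermiteFunction m y)]
  · refine monotoneOn_of_hasDerivWithinAt_nonneg (convex_Iic 0)
      (continuous_hermiteEnergy m).continuousOn
      (fun y _ => (hasDerivAt_hermiteEnergy m y).hasDerivWithinAt) (fun y hy => ?_)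
      hx self_mem_Iic hx
    rw [interior_Iic] at hy
    have : y < 0 := hy
    nlinarith [sq_nonneg (hermiteFunction m y)]

theorem hermiteEnergy_le (m : ℕ) (x : ℝ) :
    hermiteEnergy m x ≤ m * hermiteFunction (m - 1) x ^ 2 +
      (m + 1) * hermiteFunction (m + 1) x ^ 2 + (2 * m + 1) * hermiteFunction m x ^ 2 := by
  have := deriv_hermiteFunction_sq_le m x
  have := sq_nonneg (x * hermiteFunction m x)
  unfold hermiteEnergy
  nlinarith

theorem intervalIntegral_hermiteEnergy_le (m : ℕ) {a : ℝ} (ha : 0 ≤ a) :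
    ∫ x in 0..a, hermiteEnergy m x ≤ 2 * (2 * m + 1) := by
  have hint (k : ℕ) (c : ℝ) :
      IntervalIntegrable (fun x => c * hermiteFunction k x ^ 2) volume 0 a :=
    (continuous_const.mul ((continuous_hermiteFunction k).pow 2)).intervalIntegrable _ _
  have hle (k : ℕ) := intervalIntegral_hermiteFunction_sq_le_one k ha
  calc ∫ x in 0..a, hermiteEnergy m x
      ≤ ∫ x in 0..a, (m * hermiteFunction (m - 1) x ^ 2 +
          (m + 1) * hermiteFunction (m + 1) x ^ 2 + (2 * m + 1) * hermiteFunction m x ^ 2) :=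
        intervalIntegral.integral_mono_on ha ((continuous_hermiteEnergy m).intervalIntegrable _ _)
          (((hint _ _).add (hint _ _)).add (hint _ _)) fun x _ => hermiteEnergy_le m x
    _ = m * (∫ x in 0..a, hermiteFunction (m - 1) x ^ 2)
          + (m + 1) * (∫ x in 0..a, hermiteFunction (m + 1) x ^ 2)
          + (2 * m + 1) * ∫ x in 0..a, hermiteFunction m x ^ 2 := by
        rw [intervalIntegral.integral_add ((hint _ _).add (hint _ _)) (hint _ _),
          intervalIntegral.integral_add (hint _ _) (hint _ _)]
        simp only [intervalIntegral.integral_const_mul]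
    _ ≤ m * 1 + (m + 1) * 1 + (2 * m + 1) * 1 := by gcongr <;> apply hle
    _ = 2 * (2 * m + 1) := by ring

-- On `[0, √(2m+1) / 2]`, `|E'(t)| = 2 |t| h(t)² ≤ √(2m+1) h(t)²`, and `∫ h² ≤ 1`.
theorem hermiteEnergy_zero_le_add (m : ℕ) {x : ℝ} (hx : x ∈ Icc 0 (√(2 * m + 1) / 2)) :
    hermiteEnergy m 0 ≤ hermiteEnergy m x + √(2 * m + 1) := by
  set s := √(2 * m + 1 : ℝ)
  have hh := continuous_hermiteFunction m
  have hftc : ∫ t in 0..x, -2 * t * hermiteFunction m t ^ 2 =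
      hermiteEnergy m x - hermiteEnergy m 0 :=
    intervalIntegral.integral_eq_sub_of_hasDerivAt (fun t _ => hasDerivAt_hermiteEnergy m t)
      ((by fun_prop : Continuous fun t => -2 * t * hermiteFunction m t ^ 2).intervalIntegrable _ _)
  have hmono : ∫ t in 0..x, -(s * hermiteFunction m t ^ 2) ≤
      ∫ t in 0..x, -2 * t * hermiteFunction m t ^ 2 := by
    refine intervalIntegral.integral_mono_on hx.1
      ((by fun_prop : Continuous fun t => -(s * hermiteFunction m t ^ 2)).intervalIntegrable _ _)
      ((by fun_prop : Continuous fun t => -2 * t * hermiteFunction m t ^ 2).intervalIntegrable _ _)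
      fun t ht => ?_
    nlinarith [ht.1, ht.2, hx.2, sq_nonneg (hermiteFunction m t)]
  rw [intervalIntegral.integral_neg, intervalIntegral.integral_const_mul] at hmono
  have := mul_le_of_le_one_right (Real.sqrt_nonneg _ : 0 ≤ s)
    (intervalIntegral_hermiteFunction_sq_le_one m hx.1)
  linarith

theorem hermiteEnergy_zero_le (m : ℕ) : hermiteEnergy m 0 ≤ 5 * √(2 * m + 1) := by
  set s := √(2 * m + 1 : ℝ)
  have hs : 0 < s := by positivity
  have hss : s ^ 2 = 2 * m + 1 := Real.sq_sqrt (by positivity)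
  have hcont := continuous_hermiteEnergy m
  have havg := intervalIntegral.integral_mono_on (μ := volume) (by positivity)
    intervalIntegrable_const
    ((by fun_prop : Continuous fun x => hermiteEnergy m x + s).intervalIntegrable _ _)
    fun x hx => hermiteEnergy_zero_le_add m hx
  rw [intervalIntegral.integral_const, intervalIntegral.integral_add
    (hcont.intervalIntegrable _ _) intervalIntegrable_const, intervalIntegral.integral_const,
    smul_eq_mul, smul_eq_mul, sub_zero] at havg
  have hE := intervalIntegral_hermiteEnergy_le m (by positivity : 0 ≤ s / 2)
  nlinarith

theorem hermiteFunction_sq_le_of_abs_le (m : ℕ) {x : ℝ} (hx : |x| ≤ √(2 * m + 1) / 2) :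
    hermiteFunction m x ^ 2 ≤ 7 / √(2 * m + 1) := by
  set s := √(2 * m + 1 : ℝ)
  have hs : 0 < s := by positivity
  have hss : s ^ 2 = 2 * m + 1 := Real.sq_sqrt (by positivity)
  have hx2 : x ^ 2 ≤ (s / 2) ^ 2 := by
    rw [← sq_abs]; exact pow_le_pow_left₀ (abs_nonneg x) hx 2
  have hE : (2 * m + 1 - x ^ 2) * hermiteFunction m x ^ 2 ≤ 5 * s :=
    calc (2 * m + 1 - x ^ 2) * hermiteFunction m x ^ 2 ≤ hermiteEnergy m x :=
          le_add_of_nonneg_left (sq_nonneg _)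
      _ ≤ hermiteEnergy m 0 := hermiteEnergy_le_hermiteEnergy_zero m x
      _ ≤ 5 * s := hermiteEnergy_zero_le m
  rw [le_div_iff₀ hs]
  nlinarith [sq_nonneg (hermiteFunction m x)]

theorem hermiteFunction_mul_deriv_nonpos (k : ℕ) {y : ℝ} (hy : √(2 * k + 1) ≤ y) :
    hermiteFunction k y * deriv (hermiteFunction k) y ≤ 0 := by
  set g := fun x => hermiteFunction k x * deriv (hermiteFunction k) x
  have hderiv : ∀ x, HasDerivAt g
      (deriv (hermiteFunction k) x ^ 2 + (x ^ 2 - (2 * k + 1)) * hermiteFunction k x ^ 2) x :=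
    fun x => ((differentiable_hermiteFunction k x).hasDerivAt.mul
      (hasDerivAt_deriv_hermiteFunction k x)).congr_deriv (by ring)
  have hmono : MonotoneOn g (Ici √(2 * k + 1)) := by
    refine monotoneOn_of_hasDerivWithinAt_nonneg (convex_Ici _)
      (fun x _ => (hderiv x).continuousAt.continuousWithinAt)
      (fun x _ => (hderiv x).hasDerivWithinAt) fun x hx => ?_
    rw [interior_Ici, mem_Ioi] at hx
    have hx2 : 2 * k + 1 ≤ x ^ 2 := by
      rw [← Real.sq_sqrt (by positivity : (0 : ℝ) ≤ 2 * k + 1)]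
      exact pow_le_pow_left₀ (Real.sqrt_nonneg _) hx.le 2
    nlinarith [sq_nonneg (deriv (hermiteFunction k) x), sq_nonneg (hermiteFunction k x)]
  have htendsto : Tendsto g atTop (𝓝 0) := by
    have h := (((tendsto_hermiteFunction_mul_cocompact k (k - 1)).const_mul √(2 * k)).sub
      ((tendsto_hermiteFunction_mul_cocompact k (k + 1)).const_mul √(2 * (k + 1)))).div_const 2
    rw [mul_zero, mul_zero, sub_zero, zero_div] at h
    refine (h.mono_left atTop_le_cocompact).congr fun x => ?_
    simp only [g, deriv_hermiteFunction]
    ring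
  exact ge_of_tendsto htendsto (eventually_atTop.2 ⟨y, fun z hz => hmono (mem_Ici.2 hy)
    (mem_Ici.2 (hy.trans hz)) hz⟩)

theorem antitoneOn_hermiteFunction_sq (k : ℕ) :
    AntitoneOn (fun x => hermiteFunction k x ^ 2) (Ici √(2 * k + 1)) := by
  have hderiv : ∀ x, HasDerivAt (fun x => hermiteFunction k x ^ 2)
      (2 * (hermiteFunction k x * deriv (hermiteFunction k) x)) x := fun x =>
    ((differentiable_hermiteFunction k x).hasDerivAt.pow 2).congr_deriv (by simp; ring)
  refine antitoneOn_of_hasDerivWithinAt_nonpos (convex_Ici _)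
    (fun x _ => (hderiv x).continuousAt.continuousWithinAt)
    (fun x _ => (hderiv x).hasDerivWithinAt) fun x hx => ?_
  rw [interior_Ici, mem_Ioi] at hx
  linarith [hermiteFunction_mul_deriv_nonpos k hx.le]

theorem hermiteFunction_sq_le_two_div (k : ℕ) {y : ℝ} (hy : 2 * √(2 * k + 1) ≤ y) :
    hermiteFunction k y ^ 2 ≤ 2 / y := by
  have hs : 0 < √(2 * k + 1 : ℝ) := by positivity
  have hmono :
      ∫ _ in y / 2..y, hermiteFunction k y ^ 2 ≤ ∫ t in y / 2..y, hermiteFunction k t ^ 2 :=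
    intervalIntegral.integral_mono_on (by linarith) intervalIntegrable_const
      (((continuous_hermiteFunction k).pow 2).intervalIntegrable _ _)
      fun t ht => antitoneOn_hermiteFunction_sq k (mem_Ici.2 (by linarith [ht.1]))
        (mem_Ici.2 (by linarith)) ht.2
  rw [intervalIntegral.integral_const, smul_eq_mul] at hmono
  have := intervalIntegral_hermiteFunction_sq_le_one k (by linarith : y / 2 ≤ y)
  rw [le_div_iff₀ (by linarith)]
  linarith

theorem hermiteFunction_neg (k : ℕ) (x : ℝ) :
    hermiteFunction k (-x) = (-1) ^ k * hermiteFunction k x := by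
  have hparity := congrArg (aeval (√2 * x)) (hermite_comp_neg_X k)
  rw [aeval_comp, map_neg, aeval_X, map_mul, map_pow, map_neg, map_one] at hparity
  rw [hermiteFunction_apply, hermiteFunction_apply, mul_neg, hparity, neg_sq]
  ring

theorem hermiteFunction_sq_le_two_div_abs (k : ℕ) {y : ℝ} (hy : 2 * √(2 * k + 1) ≤ |y|) :
    hermiteFunction k y ^ 2 ≤ 2 / |y| := by
  rcases le_total 0 y with hy0 | hy0
  · rw [abs_of_nonneg hy0] at hy ⊢
    exact hermiteFunction_sq_le_two_div k hy
  · rw [abs_of_nonpos hy0] at hy ⊢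
    have heven : hermiteFunction k (-y) ^ 2 = hermiteFunction k y ^ 2 := by
      rw [hermiteFunction_neg, mul_pow, ← pow_mul, pow_mul', neg_one_sq, one_pow, one_mul]
    rw [← heven]
    exact hermiteFunction_sq_le_two_div k hy

theorem hermiteFunction_sq_mul_sq_le {α : ℝ} (hα : 0 < α) {m n : ℕ}
    (hmn : √(2 * n + 1) ≤ α / 4 * √(2 * m + 1)) (x : ℝ) :
    hermiteFunction m x ^ 2 * hermiteFunction n (α * x) ^ 2 ≤
      7 / √(2 * m + 1) * hermiteFunction n (α * x) ^ 2 +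
        4 / (α * √(2 * m + 1)) * hermiteFunction m x ^ 2 := by
  set s := √(2 * m + 1 : ℝ)
  have hs : 0 < s := by positivity
  rcases le_or_gt |x| (s / 2) with hx | hx
  · have hbulk := mul_le_mul_of_nonneg_right (hermiteFunction_sq_le_of_abs_le m hx)
      (sq_nonneg (hermiteFunction n (α * x)))
    have : 0 ≤ 4 / (α * s) * hermiteFunction m x ^ 2 := by positivity
    linarith
  · have habs : |α * x| = α * |x| := by rw [abs_mul, abs_of_pos hα]
    have htail := hermiteFunction_sq_le_two_div_abs n (y := α * x) (by
      rw [habs]; nlinarith [Real.sqrt_nonneg (2 * n + 1 : ℝ)])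
    have hdiv : 2 / |α * x| ≤ 4 / (α * s) := by
      rw [habs, div_le_div_iff₀ (by nlinarith) (by positivity)]
      nlinarith
    have := mul_le_mul_of_nonneg_left (htail.trans hdiv) (sq_nonneg (hermiteFunction m x))
    have : 0 ≤ 7 / s * hermiteFunction n (α * x) ^ 2 := by positivity
    linarith

theorem integral_hermiteFunction_comp_mul_sq (n : ℕ) {α : ℝ} (hα : 0 < α) :
    ∫ x, hermiteFunction n (α * x) ^ 2 = α⁻¹ := by
  rw [Measure.integral_comp_mul_left (fun y => hermiteFunction n y ^ 2) α,
    integral_hermiteFunction_sq, abs_of_pos (inv_pos.2 hα), smul_eq_mul, mul_one]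

/-- Bilinear estimate: if `√(2n+1) ≤ (α/4)√(2m+1)` then
`∫ h_m(x)² h_n(αx)² dx ≤ C / (α √(2m+1))` for a universal constant `C`. -/
theorem hermite_bilinear_rescaled :
    ∃ C > 0, ∀ (α : ℝ), 0 < α → ∀ (m n : ℕ),
      Real.sqrt (2 * (n : ℝ) + 1) ≤ (α / 4) * Real.sqrt (2 * (m : ℝ) + 1) →
      (∫ x : ℝ, (hermiteFunction m x) ^ 2 * (hermiteFunction n (α * x)) ^ 2)
        ≤ C / (α * Real.sqrt (2 * (m : ℝ) + 1)) := by
  refine ⟨11, by norm_num, fun α hα m n hmn => ?_⟩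
  have hn := (integrable_hermiteFunction_sq n).comp_mul_left' hα.ne'
  have hm := integrable_hermiteFunction_sq m
  calc ∫ x, hermiteFunction m x ^ 2 * hermiteFunction n (α * x) ^ 2
      ≤ ∫ x, (7 / √(2 * m + 1) * hermiteFunction n (α * x) ^ 2 +
          4 / (α * √(2 * m + 1)) * hermiteFunction m x ^ 2) :=
        integral_mono_of_nonneg (.of_forall fun x => by positivity)
          ((hn.const_mul _).add (hm.const_mul _))
          (.of_forall (hermiteFunction_sq_mul_sq_le hα hmn))
    _ = 7 / √(2 * m + 1) * α⁻¹ + 4 / (α * √(2 * m + 1)) := by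
        rw [integral_add (hn.const_mul _) (hm.const_mul _), integral_const_mul,
          integral_const_mul, integral_hermiteFunction_comp_mul_sq n hα,
          integral_hermiteFunction_sq, mul_one]
    _ = 11 / (α * √(2 * m + 1)) := by field_simp; ring
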